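/- Let A ∈ ℂ^{n×n} and B ∈ ℂ^{n×m}. The controllability matrix [B, AB, ..., A^{n-1}B] has rank n if and only if rank [zI − A, B] = n for every complex scalar z. -/

import Mathlib

/-!
Both ranks equal `n` exactly when the matrix has no nonzero left null vector. A left null vector
`v` of `[zI - A, B]` is a left eigenvector of `A` with `v B = 0`, so `v A^k B = z^k v B = 0` for
all `k` and `v` is a left null vector of the controllability matrix. Conversely, by
Cayley–Hamilton a left null vector of the controllability matrix satisfies `v A^k B = 0` for all
`k`, so these vectors form a nonzero subspace invariant under `v ↦ v A`; over `ℂ` the restriction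
of `v ↦ v A` to it has an eigenvector, which is a left null vector of `[zI - A, B]`.
-/

open Matrix

/-- The controllability matrix `[B, AB, ..., A^(n-1)B]` of a pair `(A, B)`. -/
noncomputable def ctrbMatrix {n m : ℕ} (A : Matrix (Fin n) (Fin n) ℂ)
    (B : Matrix (Fin n) (Fin m) ℂ) : Matrix (Fin n) (Fin n × Fin m) ℂ :=
  Matrix.of fun i kj => (A ^ (kj.1 : ℕ) * B) i kj.2

namespace Matrix

variable {K R : Type*} {n p : Type*}

theorem rank_eq_card_iff_forall_vecMul_eq_zero [Field K] [Fintype n] [Fintype p]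
    (M : Matrix n p K) : M.rank = Fintype.card n ↔ ∀ v, v ᵥ* M = 0 → v = 0 := by
  rw [rank_eq_finrank_span_row, eq_comm, ← Set.finrank,
    ← linearIndependent_iff_card_eq_finrank_span, ← vecMul_injective_iff, ← coe_vecMulLinear,
    injective_iff_map_eq_zero]
  rfl

theorem vecMul_fromCols_sub_eq_zero_iff [CommRing R] [Fintype n] [DecidableEq n]
    (A : Matrix n n R) (B : Matrix n p R) (z : R) (v : n → R) :
    v ᵥ* fromCols (z • 1 - A) B = 0 ↔ v ᵥ* A = z • v ∧ v ᵥ* B = 0 := by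
  rw [vecMul_fromCols, ← Sum.elim_zero_zero, Sum.elim_eq_iff, vecMul_sub, vecMul_smul, vecMul_one,
    sub_eq_zero, eq_comm (a := z • v)]

theorem vecMul_pow_eq_pow_smul [CommRing R] [Fintype n] [DecidableEq n] {A : Matrix n n R}
    {v : n → R} {z : R} (hv : v ᵥ* A = z • v) (k : ℕ) : v ᵥ* A ^ k = z ^ k • v := by
  induction k with
  | zero => simp
  | succ k ih => rw [pow_succ, ← vecMul_vecMul, ih, smul_vecMul, hv, smul_smul, pow_succ]

open Polynomial in
theorem vecMul_pow_mul_eq_zero_of_forall_lt [CommRing R] [Nontrivial R] [Fintype n]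
    [DecidableEq n] {A : Matrix n n R} {B : Matrix n p R} {v : n → R}
    (hv : ∀ k < Fintype.card n, v ᵥ* (A ^ k * B) = 0) (k : ℕ) : v ᵥ* (A ^ k * B) = 0 := by
  have hdeg : (X ^ k %ₘ A.charpoly).degree < Fintype.card n := by
    simpa [charpoly_degree_eq_dim] using degree_modByMonic_lt (X ^ k) A.charpoly_monic
  rw [pow_eq_aeval_mod_charpoly, aeval_eq_sum_range, Matrix.sum_mul, vecMul_sum]
  refine Finset.sum_eq_zero fun i _ => ?_
  rw [smul_mul, vecMul_smul]
  by_cases hi : i < Fintype.card n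
  · rw [hv i hi, smul_zero]
  · rw [coeff_eq_zero_of_degree_lt (hdeg.trans_le (by exact_mod_cast not_lt.mp hi)), zero_smul]

theorem exists_vecMul_eq_smul_of_forall_vecMul_pow_mul_eq_zero [Field K] [IsAlgClosed K]
    [Fintype n] [DecidableEq n] {A : Matrix n n K} {B : Matrix n p K} {v : n → K} (hv0 : v ≠ 0)
    (hv : ∀ k, v ᵥ* (A ^ k * B) = 0) : ∃ z : K, ∃ w ≠ 0, w ᵥ* A = z • w ∧ w ᵥ* B = 0 := by
  let W : Submodule K (n → K) := ⨅ k : ℕ, LinearMap.ker (A ^ k * B).vecMulLinear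
  have mem_W : ∀ w, w ∈ W ↔ ∀ k, w ᵥ* (A ^ k * B) = 0 := by simp [W]
  have hAW : ∀ w ∈ W, A.vecMulLinear w ∈ W := fun w hw => (mem_W _).2 fun k => by
    rw [vecMulLinear_apply, vecMul_vecMul, ← Matrix.mul_assoc, ← pow_succ']
    exact (mem_W w).1 hw (k + 1)
  have : Nontrivial W := Submodule.nontrivial_iff_ne_bot.mpr fun hbot =>
    hv0 <| (Submodule.mem_bot K).1 (hbot ▸ (mem_W v).2 hv)
  obtain ⟨z, hz⟩ := Module.End.exists_eigenvalue (A.vecMulLinear.restrict hAW)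
  obtain ⟨⟨w, hwW⟩, hw⟩ := hz.exists_hasEigenvector
  refine ⟨z, w, fun h => hw.2 (Subtype.ext h), congrArg Subtype.val hw.apply_eq_smul, ?_⟩
  simpa using (mem_W w).1 hwW 0

end Matrix

theorem vecMul_ctrbMatrix_eq_zero_iff {n m : ℕ} (A : Matrix (Fin n) (Fin n) ℂ)
    (B : Matrix (Fin n) (Fin m) ℂ) (v : Fin n → ℂ) :
    v ᵥ* ctrbMatrix A B = 0 ↔ ∀ k < n, v ᵥ* (A ^ k * B) = 0 := by
  constructor
  · intro h k hk
    ext j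
    exact congr_fun h (⟨k, hk⟩, j)
  · intro h
    ext ⟨k, j⟩
    exact congr_fun (h k k.2) j

theorem controllable_iff_hautus_rank
    {n m : ℕ} (A : Matrix (Fin n) (Fin n) ℂ) (B : Matrix (Fin n) (Fin m) ℂ) :
    (ctrbMatrix A B).rank = n ↔
      ∀ z : ℂ, (Matrix.fromCols (z • (1 : Matrix (Fin n) (Fin n) ℂ) - A) B).rank = n := by
  have rank_eq_n {p : Type} [Fintype p] (M : Matrix (Fin n) p ℂ) :
      M.rank = n ↔ ∀ v, v ᵥ* M = 0 → v = 0 := by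
    rw [← M.rank_eq_card_iff_forall_vecMul_eq_zero, Fintype.card_fin]
  simp only [rank_eq_n, vecMul_ctrbMatrix_eq_zero_iff, vecMul_fromCols_sub_eq_zero_iff]
  constructor
  · rintro h z v ⟨hA, hB⟩
    refine h v fun k _ => ?_
    rw [← vecMul_vecMul, vecMul_pow_eq_pow_smul hA, smul_vecMul, hB, smul_zero]
  · intro h v hv
    by_contra hv0
    have hv' : ∀ k < Fintype.card (Fin n), v ᵥ* (A ^ k * B) = 0 := by simpa using hv
    obtain ⟨z, w, hw0, hA, hB⟩ := exists_vecMul_eq_smul_of_forall_vecMul_pow_mul_eq_zero hv0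
      (vecMul_pow_mul_eq_zero_of_forall_lt hv')
    exact hw0 (h z w ⟨hA, hB⟩)
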